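/- (Multipole asymptotics.) Fix ν > 0 and h ∈ [0, 1), set θ_h := arcsin h, and define G : ℝ → ℝ by G(x) := (2ν/π)·∫₀^∞ t·e^{−t|x|·cos θ_h} / (ν²t²cos²θ_h + 4(t² − 1)²) dt. Let f : ℝ → ℝ be measurable with |f(y)| ≤ C₀/(1 + y⁴) for some C₀ > 0 and all y ∈ ℝ. Then lim_{x→+∞} x²·∫_ℝ G(x − y) f(y) dy = (ν/(2π·cos²θ_h))·∫_ℝ f(y) dy. -/

import Mathlib

open MeasureTheory Real Filter Set
open scoped ENNReal Topology

/-- The fundamental solution of the linearized Néel wall operator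
`L = -d²/dx² + (ν/2) cos²θ_h (-d²/dx²)^{1/2} + cos²θ_h`, with `θ_h = arcsin h`. -/
noncomputable def Gfun (ν h : ℝ) (x : ℝ) : ℝ :=
  2 * ν / Real.pi *
    ∫ t in Set.Ioi (0 : ℝ),
      t * Real.exp (-t * |x| * Real.cos (Real.arcsin h)) /
        (ν ^ 2 * t ^ 2 * Real.cos (Real.arcsin h) ^ 2 + 4 * (t ^ 2 - 1) ^ 2)

/-! For `x > 0` the substitution `t = s / x` gives
`x² G(x) = (2ν/π) ∫₀^∞ s e^{-cs} / D(s/x) ds`, with `c = cos θ_h` and `D` the denominator in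
`Gfun`. As `D` is bounded below by a positive constant, this shows that `x² G(x)` is bounded and,
by dominated convergence, tends to `(2ν/π) / (c² D(0)) = ν / (2π c²)`. Since
`x² ≤ 2(x - y)² + 2y²`, the integrand `x² G(x - y) f(y)` is then dominated by a multiple of
`(1 + y²) |f(y)|`, which is integrable thanks to the quartic decay of `f`, and dominated
convergence applies once more. -/

noncomputable def laplaceIntegral (d : ℝ → ℝ) (c x : ℝ) : ℝ :=
  ∫ t in Ioi (0 : ℝ), t * exp (-t * x * c) / d t

lemma integrableOn_mul_exp_neg_mul {c : ℝ} (hc : 0 < c) :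
    IntegrableOn (fun s : ℝ => s * exp (-c * s)) (Ioi 0) := by
  simpa only [rpow_one] using
    integrableOn_rpow_mul_exp_neg_mul_rpow (p := 1) (s := 1) (by norm_num) one_pos hc

lemma integral_mul_exp_neg_mul {c : ℝ} (hc : 0 < c) :
    ∫ s in Ioi (0 : ℝ), s * exp (-c * s) = 1 / c ^ 2 := by
  have h := integral_rpow_mul_exp_neg_mul_rpow (p := 1) (q := 1) one_pos (by norm_num) hc
  simp only [rpow_one] at h
  rw [h]
  norm_num [Gamma_two]

section laplaceIntegral

variable {d : ℝ → ℝ} {c m x : ℝ}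

lemma norm_div_le_inv_mul (hm : 0 < m) (hdm : ∀ t, m ≤ d t) {a : ℝ} (ha : 0 ≤ a) (t : ℝ) :
    ‖a / d t‖ ≤ m⁻¹ * a := by
  rw [norm_div, norm_of_nonneg ha, norm_of_nonneg (hm.trans_le (hdm t)).le, div_eq_inv_mul]
  exact mul_le_mul_of_nonneg_right (inv_anti₀ hm (hdm t)) ha

lemma measurable_laplaceIntegral (hd : Measurable d) : Measurable (laplaceIntegral d c) := by
  have hF : Measurable fun p : ℝ × ℝ => p.2 * exp (-p.2 * p.1 * c) / d p.2 := by fun_prop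
  exact (hF.stronglyMeasurable.integral_prod_right' (ν := volume.restrict (Ioi 0))).measurable

lemma abs_laplaceIntegral_le (hc : 0 ≤ c) (hx : 0 ≤ x) (hd : ∀ t, 0 < d t)
    (hint : IntegrableOn (fun t => t / d t) (Ioi 0)) :
    |laplaceIntegral d c x| ≤ ∫ t in Ioi (0 : ℝ), t / d t := by
  rw [← norm_eq_abs, laplaceIntegral]
  refine norm_integral_le_of_norm_le hint
    (ae_restrict_of_forall_mem measurableSet_Ioi fun t (ht : 0 < t) => ?_)
  have hexp : exp (-t * x * c) ≤ 1 :=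
    exp_le_one_iff.mpr (by nlinarith [mul_nonneg (mul_nonneg ht.le hx) hc])
  rw [norm_of_nonneg (div_nonneg (by positivity) (hd t).le)]
  exact div_le_div_of_nonneg_right (mul_le_of_le_one_right ht.le hexp) (hd t).le

lemma sq_mul_laplaceIntegral (hx : 0 < x) :
    x ^ 2 * laplaceIntegral d c x = ∫ s in Ioi (0 : ℝ), s * exp (-c * s) / d (s / x) := by
  have hsubst := integral_comp_mul_left_Ioi (fun s => s * exp (-c * s) / d (s / x)) 0 hx
  rw [mul_zero, smul_eq_mul] at hsubst
  have hscale : ∀ t, x * t * exp (-c * (x * t)) / d (x * t / x) =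
      x * (t * exp (-t * x * c) / d t) := fun t => by
    rw [mul_div_cancel_left₀ _ hx.ne']; ring_nf
  simp only [hscale, integral_const_mul] at hsubst
  calc x ^ 2 * laplaceIntegral d c x = x * (x * laplaceIntegral d c x) := by ring
    _ = x * (x⁻¹ * ∫ s in Ioi (0 : ℝ), s * exp (-c * s) / d (s / x)) := by
      rw [laplaceIntegral, hsubst]
    _ = _ := by rw [← mul_assoc, mul_inv_cancel₀ hx.ne', one_mul]

lemma abs_sq_mul_laplaceIntegral_le (hc : 0 < c) (hm : 0 < m) (hdm : ∀ t, m ≤ d t)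
    (hx : 0 ≤ x) : |x ^ 2 * laplaceIntegral d c x| ≤ m⁻¹ * (1 / c ^ 2) := by
  rcases hx.eq_or_lt with rfl | hx
  · rw [zero_pow two_ne_zero, zero_mul, abs_zero]
    positivity
  rw [sq_mul_laplaceIntegral hx, ← integral_mul_exp_neg_mul hc, ← integral_const_mul]
  exact norm_integral_le_of_norm_le ((integrableOn_mul_exp_neg_mul hc).const_mul _)
    (ae_restrict_of_forall_mem measurableSet_Ioi fun s (hs : 0 < s) =>
      norm_div_le_inv_mul hm hdm (by positivity) _)

lemma tendsto_sq_mul_laplaceIntegral (hc : 0 < c) (hm : 0 < m) (hdm : ∀ t, m ≤ d t)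
    (hd : Measurable d) (hd0 : ContinuousWithinAt d (Ioi 0) 0) :
    Tendsto (fun x => x ^ 2 * laplaceIntegral d c x) atTop (𝓝 (1 / (c ^ 2 * d 0))) := by
  have hlim : Tendsto (fun x => ∫ s in Ioi (0 : ℝ), s * exp (-c * s) / d (s / x)) atTop
      (𝓝 (∫ s in Ioi (0 : ℝ), s * exp (-c * s) / d 0)) := by
    refine tendsto_integral_filter_of_dominated_convergence (fun s => m⁻¹ * (s * exp (-c * s)))
      (Eventually.of_forall fun x =>
        (by fun_prop : Measurable fun s => s * exp (-c * s) / d (s / x)).aestronglyMeasurable)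
      (Eventually.of_forall fun x => ae_restrict_of_forall_mem measurableSet_Ioi
        fun s (hs : 0 < s) => norm_div_le_inv_mul hm hdm (by positivity) _)
      ((integrableOn_mul_exp_neg_mul hc).const_mul _)
      (ae_restrict_of_forall_mem measurableSet_Ioi fun s (hs : 0 < s) => ?_)
    have hsx : Tendsto (fun x => s / x) atTop (𝓝[>] 0) := tendsto_nhdsWithin_iff.mpr
      ⟨tendsto_id.const_div_atTop s, (eventually_gt_atTop 0).mono fun x hx => div_pos hs hx⟩
    exact tendsto_const_nhds.div (hd0.tendsto.comp hsx) (hm.trans_le (hdm 0)).ne'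
  rw [integral_div, integral_mul_exp_neg_mul hc, div_div] at hlim
  exact hlim.congr' ((eventually_gt_atTop 0).mono fun x hx => (sq_mul_laplaceIntegral hx).symm)

end laplaceIntegral

def neelDenom (ν c t : ℝ) : ℝ := ν ^ 2 * t ^ 2 * c ^ 2 + 4 * (t ^ 2 - 1) ^ 2

section neelDenom

variable {ν c : ℝ}

lemma continuous_neelDenom (ν c : ℝ) : Continuous (neelDenom ν c) := by
  unfold neelDenom; fun_prop

lemma min_le_neelDenom (t : ℝ) : min (9 / 4) (ν ^ 2 * c ^ 2 / 4) ≤ neelDenom ν c t := by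
  unfold neelDenom
  rcases le_or_gt (t ^ 2) (1 / 4) with ht | ht
  · exact (min_le_left _ _).trans (by nlinarith [sq_nonneg (ν * t * c)])
  · exact (min_le_right _ _).trans (by nlinarith [sq_nonneg (t ^ 2 - 1), sq_nonneg (ν * c)])

lemma min_neelDenom_pos (hνc : ν * c ≠ 0) : 0 < min (9 / 4 : ℝ) (ν ^ 2 * c ^ 2 / 4) :=
  lt_min (by norm_num) (by rw [← mul_pow]; positivity)

lemma integrableOn_div_neelDenom (hνc : ν * c ≠ 0) :
    IntegrableOn (fun t => t / neelDenom ν c t) (Ioi 0) := by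
  set m := min (9 / 4 : ℝ) (ν ^ 2 * c ^ 2 / 4)
  have hm : 0 < m := min_neelDenom_pos hνc
  refine (integrable_inv_one_add_sq.const_mul (1 + 6 / m)).integrableOn.mono'
    ((continuous_id.div (continuous_neelDenom ν c) fun t =>
      (hm.trans_le (min_le_neelDenom t)).ne').aestronglyMeasurable)
    (ae_restrict_of_forall_mem measurableSet_Ioi fun t (ht : 0 < t) => ?_)
  -- `t (1 + t²) ≤ 2 + 2 t⁴ ≤ D(t) + 6 ≤ (1 + 6 / m) D(t)`
  have hdm : m ≤ neelDenom ν c t := min_le_neelDenom t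
  have hquartic : 2 * t ^ 4 - 4 ≤ neelDenom ν c t := by
    unfold neelDenom; nlinarith [sq_nonneg (ν * t * c), sq_nonneg (t ^ 2 - 2)]
  have hpoly : t + t ^ 3 ≤ 2 + 2 * t ^ 4 := by
    nlinarith [sq_nonneg (t - 1), sq_nonneg (t ^ 2 - 1), sq_nonneg (t ^ 2 - t)]
  rw [norm_of_nonneg (div_nonneg ht.le (hm.trans_le hdm).le), div_le_iff₀ (hm.trans_le hdm)]
  have hscaled : 6 ≤ 6 / m * neelDenom ν c t := by
    rw [div_mul_eq_mul_div, le_div_iff₀ hm]; linarith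
  rw [mul_right_comm, ← div_eq_mul_inv, le_div_iff₀ (by positivity)]
  nlinarith

end neelDenom

lemma Gfun_eq_laplaceIntegral (ν h x : ℝ) :
    Gfun ν h x = 2 * ν / π *
      laplaceIntegral (neelDenom ν (cos (arcsin h))) (cos (arcsin h)) |x| := rfl

lemma measurable_Gfun (ν h : ℝ) : Measurable (Gfun ν h) :=
  ((measurable_laplaceIntegral (continuous_neelDenom _ _).measurable).comp
    measurable_abs).const_mul _

section Gfun

variable {ν h : ℝ}

lemma exists_abs_Gfun_le (hν : ν ≠ 0) (hc : 0 < cos (arcsin h)) :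
    ∃ B, ∀ x, |Gfun ν h x| ≤ B := by
  have hνc : ν * cos (arcsin h) ≠ 0 := mul_ne_zero hν hc.ne'
  refine ⟨|2 * ν / π| * ∫ t in Ioi (0 : ℝ), t / neelDenom ν (cos (arcsin h)) t,
    fun x => ?_⟩
  rw [Gfun_eq_laplaceIntegral, abs_mul]
  exact mul_le_mul_of_nonneg_left (abs_laplaceIntegral_le hc.le (abs_nonneg x)
    (fun t => (min_neelDenom_pos hνc).trans_le (min_le_neelDenom t))
    (integrableOn_div_neelDenom hνc)) (abs_nonneg _)

lemma exists_abs_sq_mul_Gfun_le (hν : ν ≠ 0) (hc : 0 < cos (arcsin h)) :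
    ∃ A, ∀ x, |x ^ 2 * Gfun ν h x| ≤ A := by
  have hνc : ν * cos (arcsin h) ≠ 0 := mul_ne_zero hν hc.ne'
  refine ⟨|2 * ν / π| * ((min (9 / 4 : ℝ) (ν ^ 2 * cos (arcsin h) ^ 2 / 4))⁻¹ *
    (1 / cos (arcsin h) ^ 2)), fun x => ?_⟩
  rw [Gfun_eq_laplaceIntegral, mul_left_comm, abs_mul, ← sq_abs x]
  exact mul_le_mul_of_nonneg_left (abs_sq_mul_laplaceIntegral_le hc (min_neelDenom_pos hνc)
    min_le_neelDenom (abs_nonneg x)) (abs_nonneg _)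

lemma tendsto_sq_mul_Gfun (hν : ν ≠ 0) (hc : 0 < cos (arcsin h)) :
    Tendsto (fun x => x ^ 2 * Gfun ν h x) atTop (𝓝 (ν / (2 * π * cos (arcsin h) ^ 2))) := by
  have hνc : ν * cos (arcsin h) ≠ 0 := mul_ne_zero hν hc.ne'
  have hlim := (tendsto_sq_mul_laplaceIntegral hc (min_neelDenom_pos hνc) min_le_neelDenom
    (continuous_neelDenom _ _).measurable (continuous_neelDenom _ _).continuousWithinAt).const_mul
    (2 * ν / π)
  have hval : 2 * ν / π * (1 / (cos (arcsin h) ^ 2 * neelDenom ν (cos (arcsin h)) 0)) =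
      ν / (2 * π * cos (arcsin h) ^ 2) := by
    simp only [neelDenom]; field_simp; ring
  rw [hval] at hlim
  refine hlim.congr' ((eventually_ge_atTop 0).mono fun x hx => ?_)
  dsimp only
  rw [Gfun_eq_laplaceIntegral, abs_of_nonneg hx, mul_left_comm]

end Gfun

lemma integrable_one_add_sq_mul_of_abs_le {f : ℝ → ℝ} {C : ℝ} (hf : AEStronglyMeasurable f)
    (hfb : ∀ y, |f y| ≤ C / (1 + y ^ 4)) : Integrable fun y => (1 + y ^ 2) * f y := by
  have hC : 0 ≤ C := by simpa using (abs_nonneg _).trans (hfb 0)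
  refine (integrable_inv_one_add_sq.const_mul (2 * C)).mono'
    ((continuous_const.add (continuous_pow 2)).aestronglyMeasurable.mul hf)
    (ae_of_all _ fun y => ?_)
  have hy4 : (0 : ℝ) < 1 + y ^ 4 := by positivity
  have hy2 : (0 : ℝ) < 1 + y ^ 2 := by positivity
  calc ‖(1 + y ^ 2) * f y‖ = (1 + y ^ 2) * |f y| := by
        rw [norm_mul, norm_of_nonneg hy2.le, norm_eq_abs]
    _ ≤ (1 + y ^ 2) * (C / (1 + y ^ 4)) := mul_le_mul_of_nonneg_left (hfb y) hy2.le
    _ ≤ 2 * C * (1 + y ^ 2)⁻¹ := by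
        rw [← div_eq_mul_inv, mul_div_assoc', div_le_div_iff₀ hy4 hy2]
        nlinarith [mul_nonneg hC (sq_nonneg (y ^ 2 - 1))]

section Convolution

variable {K : ℝ → ℝ} {A B L : ℝ}

lemma abs_sq_mul_comp_sub_le (hKB : ∀ u, |K u| ≤ B) (hKA : ∀ u, |u ^ 2 * K u| ≤ A)
    (x y : ℝ) :
    |x ^ 2 * K (x - y)| ≤ 2 * max A B * (1 + y ^ 2) := by
  have hsq : x ^ 2 ≤ 2 * (x - y) ^ 2 + 2 * y ^ 2 := by nlinarith [sq_nonneg (x - 2 * y)]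
  have hA := hKA (x - y)
  have hB := hKB (x - y)
  rw [abs_mul, abs_of_nonneg (sq_nonneg _)] at hA ⊢
  calc x ^ 2 * |K (x - y)| ≤ (2 * (x - y) ^ 2 + 2 * y ^ 2) * |K (x - y)| :=
        mul_le_mul_of_nonneg_right hsq (abs_nonneg _)
    _ ≤ 2 * A + 2 * y ^ 2 * B := by nlinarith [sq_nonneg y]
    _ ≤ 2 * max A B * (1 + y ^ 2) := by
        nlinarith [le_max_left A B, le_max_right A B, sq_nonneg y]

lemma tendsto_sq_mul_comp_sub (hKL : Tendsto (fun u => u ^ 2 * K u) atTop (𝓝 L)) (y : ℝ) :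
    Tendsto (fun x => x ^ 2 * K (x - y)) atTop (𝓝 L) := by
  have hshift : Tendsto (fun x => x - y) atTop atTop :=
    tendsto_atTop_add_const_right _ _ tendsto_id
  have hratio : Tendsto (fun x => x / (x - y)) atTop (𝓝 1) := by
    have h := (tendsto_const_nhds (x := (1 : ℝ))).add
      ((tendsto_const_nhds (x := y)).div_atTop hshift)
    rw [add_zero] at h
    refine h.congr' ((eventually_gt_atTop y).mono fun x hx => ?_)
    field_simp [(sub_pos.mpr hx).ne']
    ring
  have h := (hratio.pow 2).mul (hKL.comp hshift)
  rw [one_pow, one_mul] at h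
  refine h.congr' ((eventually_gt_atTop y).mono fun x hx => ?_)
  rw [Function.comp_apply]
  field_simp [(sub_pos.mpr hx).ne']

theorem tendsto_sq_mul_integral_comp_sub_mul (hK : Measurable K) (hKB : ∀ u, |K u| ≤ B)
    (hKA : ∀ u, |u ^ 2 * K u| ≤ A) (hKL : Tendsto (fun u => u ^ 2 * K u) atTop (𝓝 L))
    {f : ℝ → ℝ} (hf : AEStronglyMeasurable f) (hfi : Integrable fun y => (1 + y ^ 2) * f y) :
    Tendsto (fun x => x ^ 2 * ∫ y, K (x - y) * f y) atTop (𝓝 (L * ∫ y, f y)) := by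
  simp_rw [← integral_const_mul, ← mul_assoc]
  refine tendsto_integral_filter_of_dominated_convergence
    (fun y => 2 * max A B * ‖(1 + y ^ 2) * f y‖)
    (Eventually.of_forall fun x =>
      ((hK.comp (measurable_const_sub x)).aestronglyMeasurable.const_mul _).mul hf)
    (Eventually.of_forall fun x => ae_of_all _ fun y => ?_) (hfi.norm.const_mul _)
    (ae_of_all _ fun y => (tendsto_sq_mul_comp_sub hKL y).mul_const _)
  simp only [norm_mul, norm_eq_abs]
  rw [← abs_mul, abs_of_pos (by positivity : (0 : ℝ) < 1 + y ^ 2), ← mul_assoc]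
  exact mul_le_mul_of_nonneg_right (abs_sq_mul_comp_sub_le hKB hKA x y) (abs_nonneg _)

end Convolution

theorem multipole_asymptotics_general (ν h : ℝ) (hν : 0 < ν) (hh : h ∈ Set.Ico (0 : ℝ) 1)
    (f : ℝ → ℝ) (hf : Measurable f) (C₀ : ℝ)
    (hfb : ∀ y : ℝ, |f y| ≤ C₀ / (1 + y ^ 4)) :
    Filter.Tendsto (fun x : ℝ => x ^ 2 * ∫ y : ℝ, Gfun ν h (x - y) * f y)
      Filter.atTop
      (nhds (ν / (2 * Real.pi * Real.cos (Real.arcsin h) ^ 2) * ∫ y : ℝ, f y)) := by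
  have hc : 0 < cos (arcsin h) := by
    rw [cos_arcsin]; exact sqrt_pos.mpr (by nlinarith [hh.1, hh.2])
  obtain ⟨B, hB⟩ := exists_abs_Gfun_le hν.ne' hc
  obtain ⟨A, hA⟩ := exists_abs_sq_mul_Gfun_le hν.ne' hc
  exact tendsto_sq_mul_integral_comp_sub_mul (measurable_Gfun ν h) hB hA
    (tendsto_sq_mul_Gfun hν.ne' hc) hf.aestronglyMeasurable
    (integrable_one_add_sq_mul_of_abs_le hf.aestronglyMeasurable hfb)

/-- multipole asymptotics: for `f` with quartic decay,
`x² ∫ G(x-y) f(y) dy → (ν/(2π cos²θ_h)) ∫ f(y) dy` as `x → +∞`. -/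
theorem multipole_asymptotics (ν h : ℝ) (hν : 0 < ν) (hh : h ∈ Set.Ico (0 : ℝ) 1)
    (f : ℝ → ℝ) (hf : Measurable f) (C₀ : ℝ) (hC₀ : 0 < C₀)
    (hfb : ∀ y : ℝ, |f y| ≤ C₀ / (1 + y ^ 4)) :
    Filter.Tendsto (fun x : ℝ => x ^ 2 * ∫ y : ℝ, Gfun ν h (x - y) * f y)
      Filter.atTop
      (nhds (ν / (2 * Real.pi * Real.cos (Real.arcsin h) ^ 2) * ∫ y : ℝ, f y)) :=
  multipole_asymptotics_general ν h hν hh f hf C₀ hfb
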